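/- arXiv:2403.07961 — 4 statements merged into one kernel-verified Lean document; each statement's English description precedes it below -/
import Mathlib

section
/- Let p > 1 and a = 1 - 2^{-1/(p+1)}. Define h_{1,1}(x) = ((1-(1-a)^p)/a)·min(x,a), and h_{1,2,(0)}(x) = 1_{[0,a]}(x)·((1-(1-x)^p) - (x/a)(1-(1-a)^p)). Then ∫₀¹ (h_{1,1}(x) + h_{1,2,(0)}(x)) dx = (1/2)·p/(p+1). -/
/-! On `[0, a]` the sum `h11 + h120` is `1 - (1 - x) ^ p`, and on `[a, 1]` it is the constant
`1 - (1 - a) ^ p`, so its integral is `1 - (1 - c) / (p + 1) - c` with `c = (1 - a) ^ (p + 1)`.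
The choice of `a` makes `c = 1 / 2`. -/

open intervalIntegral Set MeasureTheory

noncomputable def h11 (p a x : ℝ) : ℝ := ((1 - (1 - a) ^ p) / a) * min x a

noncomputable def h120 (p a : ℝ) : ℝ → ℝ :=
  indicator (Icc 0 a) fun x => (1 - (1 - x) ^ p) - (x / a) * (1 - (1 - a) ^ p)

section
variable {p a x : ℝ}

theorem h11_add_h120_of_mem_Icc (hx : x ∈ Icc 0 a) :
    h11 p a x + h120 p a x = 1 - (1 - x) ^ p := by
  rw [h11, h120, indicator_of_mem hx, min_eq_left hx.2]
  ring

theorem h11_add_h120_of_le (ha : a ≠ 0) (hax : a ≤ x) :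
    h11 p a x + h120 p a x = 1 - (1 - a) ^ p := by
  by_cases hx : x ∈ Icc 0 a
  · obtain rfl : x = a := le_antisymm hx.2 hax
    rw [h11_add_h120_of_mem_Icc hx]
  · rw [h11, h120, indicator_of_notMem hx, min_eq_right hax]
    field_simp
    ring

theorem intervalIntegrable_one_sub_rpow (hp : -1 < p) (b c : ℝ) :
    IntervalIntegrable (fun x => (1 - x) ^ p) volume b c := by
  simpa using (intervalIntegrable_rpow' hp (a := 1 - b) (b := 1 - c)).comp_sub_left 1

theorem integral_one_sub_one_sub_rpow (hp : -1 < p) (b : ℝ) :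
    ∫ x in (0 : ℝ)..b, (1 - (1 - x) ^ p) = b - (1 - (1 - b) ^ (p + 1)) / (p + 1) := by
  rw [integral_sub intervalIntegrable_const (intervalIntegrable_one_sub_rpow hp 0 b),
    intervalIntegral.integral_const, integral_comp_sub_left (fun x => x ^ p),
    integral_rpow (Or.inl hp)]
  simp only [sub_zero, Real.one_rpow, smul_eq_mul]
  ring

theorem integral_h11_add_h120 (hp : -1 < p) (ha0 : 0 < a) (ha1 : a ≤ 1) :
    ∫ x in (0 : ℝ)..1, (h11 p a x + h120 p a x)
      = 1 - (1 - (1 - a) ^ (p + 1)) / (p + 1) - (1 - a) ^ (p + 1) := by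
  have hleft : EqOn (fun x => h11 p a x + h120 p a x) (fun x => 1 - (1 - x) ^ p) (uIcc 0 a) :=
    fun x hx => h11_add_h120_of_mem_Icc (by rwa [uIcc_of_le ha0.le] at hx)
  have hright : EqOn (fun x => h11 p a x + h120 p a x) (fun _ => 1 - (1 - a) ^ p) (uIcc a 1) :=
    fun x hx => h11_add_h120_of_le ha0.ne' (by rw [uIcc_of_le ha1] at hx; exact hx.1)
  have hint_left : IntervalIntegrable (fun x => h11 p a x + h120 p a x) volume 0 a :=
    (intervalIntegrable_const.sub (intervalIntegrable_one_sub_rpow hp 0 a)).congr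
      (hleft.symm.mono uIoc_subset_uIcc)
  have hint_right : IntervalIntegrable (fun x => h11 p a x + h120 p a x) volume a 1 :=
    intervalIntegrable_const.congr (hright.symm.mono uIoc_subset_uIcc)
  rw [← integral_add_adjacent_intervals hint_left hint_right, integral_congr hleft,
    integral_congr hright, integral_one_sub_one_sub_rpow hp, intervalIntegral.integral_const,
    smul_eq_mul, Real.rpow_add_one' (sub_nonneg.2 ha1) (by linarith)]
  ring

theorem one_sub_rpow_succ_eq_half (hp : p + 1 ≠ 0) :
    (1 - (1 - 2 ^ (-(1 / (p + 1))))) ^ (p + 1) = (1 / 2 : ℝ) := by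
  rw [sub_sub_cancel, ← Real.rpow_mul zero_le_two, neg_mul, one_div_mul_cancel hp,
    Real.rpow_neg_one, one_div]

end

theorem integral_h11_plus_h120 (p a : ℝ) (hp : 1 < p)
    (ha : a = 1 - 2 ^ (-(1 / (p + 1))) ) :
    ∫ x in (0:ℝ)..1,
        (((1 - (1 - a) ^ p) / a) * min x a
          + Set.indicator (Set.Icc 0 a)
              (fun x => (1 - (1 - x) ^ p) - (x / a) * (1 - (1 - a) ^ p)) x)
      = (1 / 2) * (p / (p + 1)) := by
  have hp1 : 0 < p + 1 := by linarith
  have hpow_pos : (0 : ℝ) < 2 ^ (-(1 / (p + 1))) := Real.rpow_pos_of_pos two_pos _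
  have hpow_lt_one : (2 : ℝ) ^ (-(1 / (p + 1))) < 1 :=
    Real.rpow_lt_one_of_one_lt_of_neg one_lt_two (neg_neg_of_pos (by positivity))
  change ∫ x in (0 : ℝ)..1, (h11 p a x + h120 p a x) = _
  rw [integral_h11_add_h120 (by linarith) (by linarith) (by linarith), ha,
    one_sub_rpow_succ_eq_half hp1.ne']
  field_simp
  ring
end

section
/- Let p > 1 and set β = (1/2)·p/(p+1) + (1 + 2^{p/(p+1)} - 2^{1/(p+1)})/4. Then β < p/(p+1). -/
/-!
With `t = p / (p + 1) ∈ (1/2, 1)` and `1 / (p + 1) = 1 - t`, the claim is `2^t - 2^(1-t) < 2t - 1`.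
For `a = log 2 / 2` the left side is `2 e^a sinh ((2t - 1) a)` and `1 = 2 e^a sinh a`, so the
inequality says that `sinh`, being strictly convex on `[0, ∞)`, lies below its chord over `[0, a]`.
-/

open Real Set

theorem Real.strictConvexOn_sinh : StrictConvexOn ℝ (Ici 0) sinh :=
  StrictMonoOn.strictConvexOn_of_deriv (convex_Ici 0) continuous_sinh.continuousOn
    (by rw [deriv_sinh]; exact cosh_strictMonoOn.mono interior_subset)

theorem Real.sinh_mul_lt_mul_sinh {a x : ℝ} (ha : 0 < a) (hx₀ : 0 < x) (hx₁ : x < 1) :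
    sinh (x * a) < x * sinh a := by
  simpa using strictConvexOn_sinh.2 (mem_Ici.2 le_rfl) (mem_Ici.2 ha.le) ha.ne
    (sub_pos.2 hx₁) hx₀ (sub_add_cancel 1 x)

theorem Real.two_mul_exp_mul_sinh (a u : ℝ) :
    2 * exp a * sinh u = exp (a + u) - exp (a - u) := by
  rw [sinh_eq, exp_add, exp_sub, exp_neg]
  field_simp

theorem Real.rpow_sub_rpow_one_sub_lt {b t : ℝ} (hb : 1 < b) (ht₀ : 1 / 2 < t) (ht₁ : t < 1) :
    b ^ t - b ^ (1 - t) < (2 * t - 1) * (b - 1) := by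
  have hb₀ : 0 < b := by linarith
  have ha : 0 < log b / 2 := half_pos (log_pos hb)
  have hlhs : b ^ t - b ^ (1 - t) = 2 * exp (log b / 2) * sinh ((2 * t - 1) * (log b / 2)) := by
    rw [two_mul_exp_mul_sinh, rpow_def_of_pos hb₀, rpow_def_of_pos hb₀]
    ring_nf
  have hrhs : b - 1 = 2 * exp (log b / 2) * sinh (log b / 2) := by
    rw [two_mul_exp_mul_sinh, add_halves, sub_self, exp_zero, exp_log hb₀]
  rw [hlhs, hrhs, mul_left_comm]
  exact mul_lt_mul_of_pos_left (sinh_mul_lt_mul_sinh ha (by linarith) (by linarith))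
    (by positivity)

theorem beta_lt (p : ℝ) (hp : 1 < p) :
    (1 / 2) * (p / (p + 1)) + (1 + 2 ^ (p / (p + 1)) - 2 ^ (1 / (p + 1))) / 4
      < p / (p + 1) := by
  have hp₁ : 0 < p + 1 := by linarith
  have ht₀ : 1 / 2 < p / (p + 1) := by rw [lt_div_iff₀ hp₁]; linarith
  have ht₁ : p / (p + 1) < 1 := by rw [div_lt_one hp₁]; linarith
  have hcompl : 1 / (p + 1) = 1 - p / (p + 1) := by field_simp; ring
  have hchord := rpow_sub_rpow_one_sub_lt one_lt_two ht₀ ht₁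
  rw [hcompl]
  linarith
end

section
/- Let p > 1 and q = p/(p-1). Then sup_{y ∈ (0,1]} (1-(1-y)^p)/y^{1/p} < p/(p+1)^{1/q}, i.e., the maximal spline derivative norm α is strictly smaller than the L_q norm of h₁' where h₁(x) = 1-(1-x)^p. -/
/-!
Write `c = p / (p + 1) ^ (1 / q)`. Since `1 - (1 - y) ^ p = ∫₀ʸ p (1 - x) ^ (p - 1) dx`, Hölder's
inequality on `[0, y]` bounds the ratio by `c (1 - (1 - y) ^ (p + 1)) ^ (1 / q)`, which stays
uniformly below `c` as long as `y` stays away from `1`. Near `y = 1` the ratio is at most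
`y ^ (-1 / p)`, close to `1`, and `1 < c` because `log p > 1 - 1 / p`.
-/

open MeasureTheory Real Set

lemma integral_one_sub_rpow {r : ℝ} (hr : -1 < r) (y : ℝ) :
    ∫ x in (0 : ℝ)..y, (1 - x) ^ r = (1 - (1 - y) ^ (r + 1)) / (r + 1) := by
  rw [intervalIntegral.integral_comp_sub_left (fun x => x ^ r), integral_rpow (.inl hr),
    sub_zero, one_rpow]

lemma integral_le_rpow_mul_integral_rpow {p q : ℝ} (hpq : p.HolderConjugate q) {g : ℝ → ℝ}
    {a b : ℝ} (hab : a ≤ b) (hg : ContinuousOn g (Icc a b)) (hg₀ : ∀ x ∈ Icc a b, 0 ≤ g x) :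
    ∫ x in a..b, g x ≤ (b - a) ^ (1 / p) * (∫ x in a..b, g x ^ q) ^ (1 / q) := by
  have hmem : ∀ᵐ x ∂volume.restrict (Ioc a b), x ∈ Icc a b :=
    ae_restrict_of_forall_mem measurableSet_Ioc fun _ hx => Ioc_subset_Icc_self hx
  obtain ⟨C, hC⟩ := isCompact_Icc.exists_bound_of_continuousOn hg
  have hgLq : MemLp g (ENNReal.ofReal q) (volume.restrict (Ioc a b)) :=
    MemLp.of_bound ((hg.mono Ioc_subset_Icc_self).aestronglyMeasurable measurableSet_Ioc) C
      (hmem.mono hC)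
  have holder := integral_mul_le_Lp_mul_Lq_of_nonneg hpq (.of_forall fun _ => zero_le_one)
    (hmem.mono hg₀) (memLp_const 1) hgLq
  simp only [one_mul, one_rpow, integral_const, smul_eq_mul, mul_one] at holder
  rw [intervalIntegral.integral_of_le hab, intervalIntegral.integral_of_le hab]
  simpa [Real.volume_Ioc, hab] using holder

lemma one_sub_one_sub_rpow_nonneg {r y : ℝ} (hr : 0 ≤ r) (hy₀ : 0 ≤ y) (hy₁ : y ≤ 1) :
    0 ≤ 1 - (1 - y) ^ r :=
  sub_nonneg.2 (rpow_le_one (by linarith) (by linarith) hr)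

lemma one_sub_one_sub_rpow_le {p q : ℝ} (hpq : p.HolderConjugate q) {y : ℝ} (hy₀ : 0 ≤ y)
    (hy₁ : y ≤ 1) :
    1 - (1 - y) ^ p ≤ p / (p + 1) ^ (1 / q) * (1 - (1 - y) ^ (p + 1)) ^ (1 / q) * y ^ (1 / p) := by
  have hp : 0 < p := hpq.pos
  have hq : 0 < q := hpq.symm.pos
  have hbase : ∀ x ∈ Icc 0 y, 0 ≤ 1 - x := fun x hx => by linarith [hx.2]
  have hint : ∫ x in (0 : ℝ)..y, p * (1 - x) ^ (p - 1) = 1 - (1 - y) ^ p := by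
    rw [intervalIntegral.integral_const_mul, integral_one_sub_rpow (by linarith), sub_add_cancel,
      mul_div_cancel₀ _ hp.ne']
  have hint_pow : ∫ x in (0 : ℝ)..y, (p * (1 - x) ^ (p - 1)) ^ q
      = p ^ q * ((1 - (1 - y) ^ (p + 1)) / (p + 1)) := by
    rw [← integral_one_sub_rpow (by linarith), ← intervalIntegral.integral_const_mul]
    refine intervalIntegral.integral_congr fun x hx => ?_
    rw [uIcc_of_le hy₀] at hx
    rw [mul_rpow hp.le (rpow_nonneg (hbase x hx) _), ← rpow_mul (hbase x hx),
      hpq.sub_one_mul_conj]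
  have holder := integral_le_rpow_mul_integral_rpow hpq (g := fun x => p * (1 - x) ^ (p - 1)) hy₀
    (continuous_const.mul ((continuous_const.sub continuous_id).rpow_const
      fun _ => .inr hpq.sub_one_pos.le)).continuousOn
    (fun x hx => mul_nonneg hp.le (rpow_nonneg (hbase x hx) _))
  rw [hint, hint_pow, sub_zero] at holder
  have hA := one_sub_one_sub_rpow_nonneg (r := p + 1) (by positivity) hy₀ hy₁
  refine holder.trans_eq ?_
  rw [mul_rpow (by positivity) (by positivity), ← rpow_mul hp.le, mul_one_div_cancel hq.ne',
    rpow_one, div_rpow hA (by positivity)]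
  ring

lemma one_sub_one_sub_rpow_div_rpow_le_of_le {p q : ℝ} (hpq : p.HolderConjugate q) {y z : ℝ}
    (hy : 0 < y) (hyz : y ≤ z) (hz : z ≤ 1) :
    (1 - (1 - y) ^ p) / y ^ (1 / p) ≤
      p / (p + 1) ^ (1 / q) * (1 - (1 - z) ^ (p + 1)) ^ (1 / q) := by
  have hp : 0 < p := hpq.pos
  have hq : 0 < q := hpq.symm.pos
  rw [div_le_iff₀ (rpow_pos_of_pos hy _)]
  refine (one_sub_one_sub_rpow_le hpq hy.le (hyz.trans hz)).trans ?_
  gcongr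
  exact one_sub_one_sub_rpow_nonneg (by positivity) hy.le (hyz.trans hz)

lemma one_sub_one_sub_rpow_div_rpow_le_inv {p t y : ℝ} (hp : 0 < p) (ht : 0 < t)
    (hty : t ^ p ≤ y) (hy : y ≤ 1) :
    (1 - (1 - y) ^ p) / y ^ (1 / p) ≤ t⁻¹ := by
  have ht_le : t ≤ y ^ (1 / p) :=
    calc t = (t ^ p) ^ (1 / p) := by rw [one_div, rpow_rpow_inv ht.le hp.ne']
      _ ≤ y ^ (1 / p) := by gcongr
  rw [← one_div]
  exact div_le_div₀ zero_le_one (sub_le_self _ (rpow_nonneg (by linarith) _)) ht ht_le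

lemma one_lt_div_add_one_rpow {p q : ℝ} (hpq : p.HolderConjugate q) :
    1 < p / (p + 1) ^ (1 / q) := by
  have hp : 0 < p := hpq.pos
  rw [one_lt_div (by positivity), rpow_lt_iff_lt_log (by positivity) hp, one_div,
    ← hpq.one_sub_inv]
  have hlog_succ : log (p + 1) ≤ log p + p⁻¹ := by
    have := log_le_sub_one_of_pos (x := (p + 1) / p) (by positivity)
    have hsub : (p + 1) / p - 1 = p⁻¹ := by field_simp; ring
    rw [log_div (by positivity) hp.ne', hsub] at this
    linarith
  have hlog : 1 - p⁻¹ < log p := by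
    have := log_lt_sub_one_of_pos (inv_pos.2 hp) (inv_ne_one.2 hpq.lt.ne')
    rw [log_inv] at this
    linarith
  have h_one_sub_inv : 0 ≤ 1 - p⁻¹ := sub_nonneg.2 (inv_le_one_of_one_le₀ hpq.lt.le)
  nlinarith [mul_le_mul_of_nonneg_left hlog_succ h_one_sub_inv, mul_pos (inv_pos.2 hp) (sub_pos.2 hlog)]

theorem spline_alpha_lt (p q : ℝ) (hp : 1 < p) (hq : q = p / (p - 1)) :
    sSup ((fun y => (1 - (1 - y) ^ p) / y ^ (1 / p)) '' Set.Ioc (0:ℝ) 1)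
      < p / (p + 1) ^ (1 / q) := by
  have hpq : p.HolderConjugate q := (Real.holderConjugate_iff_eq_conjExponent hp).2 hq
  set c := p / (p + 1) ^ (1 / q)
  have hc : 1 < c := one_lt_div_add_one_rpow hpq
  obtain ⟨t, hct, ht₁⟩ := exists_between (inv_lt_one_of_one_lt₀ hc)
  have ht : 0 < t := (inv_pos.2 (zero_lt_one.trans hc)).trans hct
  have htp : t ^ p < 1 := rpow_lt_one ht.le ht₁ (by linarith)
  have hB : c * (1 - (1 - t ^ p) ^ (p + 1)) ^ (1 / q) < c :=
    mul_lt_of_lt_one_right (by linarith) <| rpow_lt_one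
      (one_sub_one_sub_rpow_nonneg (by linarith) (rpow_nonneg ht.le _) htp.le)
      (sub_lt_self _ (rpow_pos_of_pos (sub_pos.2 htp) _)) (one_div_pos.2 hpq.symm.pos)
  have hinv : t⁻¹ < c := (inv_lt_comm₀ (zero_lt_one.trans hc) ht).1 hct
  refine (Real.sSup_le ?_ ((inv_pos.2 ht).le.trans (le_max_right _ _))).trans_lt
    (max_lt hB hinv)
  rintro _ ⟨y, ⟨hy₀, hy₁⟩, rfl⟩
  rcases le_or_gt y (t ^ p) with hyt | hty
  · exact (one_sub_one_sub_rpow_div_rpow_le_of_le hpq hy₀ hyt htp.le).trans (le_max_left _ _)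
  · exact (one_sub_one_sub_rpow_div_rpow_le_inv (by linarith) ht hty.le hy₁).trans
      (le_max_right _ _)
end

section
/- Let p > 1. The function y ↦ (1-(1-y)^p)(1-y/2) attains its maximum on [0,1] at an interior point y* ∈ (0,1), and the maximum value β satisfies 1/2 ≤ β < p/(p+1). -/
/-!
Substituting `t = 1 - y`, the function becomes `(1 - t ^ p) * (1 + t) / 2`, which is `0` at
`t = 1`, `1/2` at `t = 0`, and exceeds `1/2` at the point `c` with `c ^ (p - 1) = 1/2`. So its
maximum on `[0, 1]` lies in the interior, where the critical-point equation
`p t ^ (p - 1) (1 + t) = 1 - t ^ p` holds. Combined with Bernoulli's inequality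
`t ^ p > 1 - p (1 - t)`, it gives `(p + 1) t ^ 2 < p - 1`, which is exactly what the critical value
`p t ^ (p - 1) (1 + t) ^ 2 / 2` needs in order to stay below `p / (p + 1)`.
-/

open Real Set

-- `u` stands for `t ^ (p - 1)`: the hypotheses are the critical-point equation and Bernoulli.
lemma one_sub_mul_mul_one_add_div_two_lt {p t u : ℝ} (hp : 0 < p) (ht : 0 < t)
    (hcrit : p * u * (1 + t) = 1 - u * t) (hbern : 1 - p * (1 - t) < u * t) :
    (1 - u * t) * (1 + t) / 2 < p / (p + 1) := by
  have hu : u * (p + (p + 1) * t) = 1 := by linear_combination hcrit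
  have hsq : (p + 1) * t ^ 2 < p - 1 := by
    nlinarith [mul_lt_mul_of_pos_right hbern (by positivity : 0 < p + (p + 1) * t)]
  rw [lt_div_iff₀ (by linarith)]
  nlinarith

noncomputable def splineProfile (p y : ℝ) : ℝ := (1 - (1 - y) ^ p) * (1 - y / 2)

section

variable {p : ℝ}

lemma splineProfile_one_sub (t : ℝ) : splineProfile p (1 - t) = (1 - t ^ p) * (1 + t) / 2 := by
  unfold splineProfile; ring_nf

lemma splineProfile_zero : splineProfile p 0 = 0 := by
  simp [splineProfile]

lemma splineProfile_one (hp : p ≠ 0) : splineProfile p 1 = 1 / 2 := by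
  simp [splineProfile, zero_rpow hp]; norm_num

lemma continuous_splineProfile (hp : 0 ≤ p) : Continuous (splineProfile p) := by
  unfold splineProfile
  fun_prop (disch := exact hp)

lemma hasDerivAt_splineProfile {a : ℝ} (ha : a < 1) :
    HasDerivAt (splineProfile p)
      (p * (1 - a) ^ (p - 1) * (1 - a / 2) - (1 - (1 - a) ^ p) / 2) a := by
  have hpow : HasDerivAt (fun y : ℝ => (1 - y) ^ p) (p * (1 - a) ^ (p - 1) * -1) a :=
    (hasDerivAt_rpow_const (Or.inl (sub_pos.2 ha).ne')).comp a
      ((hasDerivAt_id a).const_sub 1 |>.congr_deriv (by simp))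
  exact ((hpow.const_sub 1).mul (((hasDerivAt_id a).div_const 2).const_sub 1)).congr_deriv
    (by simp only [id]; ring)

lemma exists_rpow_eq_half_mul_self (hp : 1 < p) : ∃ c ∈ Ioo (0 : ℝ) 1, c ^ p = c / 2 := by
  have hp1 : 0 < p - 1 := sub_pos.2 hp
  set c : ℝ := (1 / 2) ^ (1 / (p - 1))
  have hc0 : 0 < c := by positivity
  have hc : c ^ (p - 1) = 1 / 2 := by
    rw [← rpow_mul (by norm_num), one_div_mul_cancel hp1.ne', rpow_one]
  refine ⟨c, ⟨hc0, rpow_lt_one (by norm_num) (by norm_num) (by positivity)⟩, ?_⟩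
  rw [rpow_sub_one hc0.ne', div_eq_iff hc0.ne'] at hc
  linarith

lemma exists_half_lt_splineProfile (hp : 1 < p) :
    ∃ y ∈ Icc (0 : ℝ) 1, 1 / 2 < splineProfile p y := by
  obtain ⟨c, ⟨hc0, hc1⟩, hc⟩ := exists_rpow_eq_half_mul_self hp
  refine ⟨1 - c, ⟨by linarith, by linarith⟩, ?_⟩
  rw [splineProfile_one_sub, hc]
  nlinarith

lemma splineProfile_lt_of_isLocalMax {a : ℝ} (hp : 1 < p) (ha : a ∈ Ioo (0 : ℝ) 1)
    (hmax : IsLocalMax (splineProfile p) a) : splineProfile p a < p / (p + 1) := by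
  have hcrit := hmax.hasDerivAt_eq_zero (hasDerivAt_splineProfile ha.2)
  obtain ⟨t, rfl⟩ : ∃ t, a = 1 - t := ⟨1 - a, by ring⟩
  have ht : 0 < t := by linarith [ha.2]
  rw [sub_sub_cancel] at hcrit
  have hpow : t ^ p = t ^ (p - 1) * t := by rw [rpow_sub_one ht.ne', div_mul_cancel₀ _ ht.ne']
  have hbern : 1 + p * (t - 1) < t ^ p := by
    simpa using one_add_mul_self_lt_rpow_one_add (s := t - 1) (by linarith) (by linarith [ha.1]) hp
  rw [hpow] at hcrit hbern
  rw [splineProfile_one_sub, hpow]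
  exact one_sub_mul_mul_one_add_div_two_lt (by linarith) ht (by linear_combination 2 * hcrit)
    (by linarith)

end

theorem spline_beta_max (p : ℝ) (hp : 1 < p) :
    ∃ y ∈ Set.Ioo (0:ℝ) 1,
      IsMaxOn (fun y => (1 - (1 - y) ^ p) * (1 - y / 2)) (Set.Icc (0:ℝ) 1) y ∧
      1 / 2 ≤ (1 - (1 - y) ^ p) * (1 - y / 2) ∧
      (1 - (1 - y) ^ p) * (1 - y / 2) < p / (p + 1) := by
  have hp0 : 0 < p := by linarith
  obtain ⟨a, haI, hmax⟩ := isCompact_Icc.exists_isMaxOn (nonempty_Icc.2 zero_le_one)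
    (continuous_splineProfile hp0.le).continuousOn
  obtain ⟨y, hy, hfy⟩ := exists_half_lt_splineProfile hp
  have hfa : 1 / 2 < splineProfile p a := hfy.trans_le (hmax hy)
  have ha0 : a ≠ 0 := by rintro rfl; rw [splineProfile_zero] at hfa; norm_num at hfa
  have ha1 : a ≠ 1 := by rintro rfl; rw [splineProfile_one hp0.ne'] at hfa; exact hfa.false
  have ha : a ∈ Ioo (0 : ℝ) 1 := ⟨haI.1.lt_of_ne' ha0, haI.2.lt_of_ne ha1⟩
  exact ⟨a, ha, hmax, hfa.le,
    splineProfile_lt_of_isLocalMax hp ha (hmax.isLocalMax (Icc_mem_nhds ha.1 ha.2))⟩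
end
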